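/- arXiv:1510.04889 — 2 statements merged into one kernel-verified Lean document; each statement's English description precedes it below -/
import Mathlib

section
/- Let A be a smooth ℂ-algebra, B = A⊗A⊗A with S₃ permuting the tensor factors, and J₃ = I₁₂ ∩ I₁₃ ∩ I₂₃. Let r : B^{S₃} → A⊗A be the restriction to S₃-invariants of μ₁₂ (multiplication of the first two tensor factors), and let D : A⊗A → K/K² be the ℂ-linear map sending a⊗b to the class of 2(a⊗b) − (b⊗a) − (ab⊗1) (which lies in K and, under K/K² ≅ Ω¹_{A/ℂ}, equals 2a·db − b·da). Then the sequence 0 → J₃ ∩ B^{S₃} → B^{S₃} →^r A⊗A →^D K/K² → 0 is exact; i.e. ker r = J₃ ∩ B^{S₃}, the image of r equals ker D, and D is surjective. -/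
/-!
Everything rests on the symmetrizer `∑_{σ ∈ S₃} σ` of `A ⊗ A ⊗ A`. On a pure tensor, `μ₁₂` of
the symmetrization of `x ⊗ y ⊗ z` is `2 (xy ⊗ z + xz ⊗ y + yz ⊗ x)`, which `D` kills by the
Leibniz rule; since an invariant `b` is a sixth of its symmetrization, `D ∘ r = 0`.

On the diagonal ideal `K` the flip `a ⊗ b ↦ b ⊗ a` acts as `-1` modulo `K²`, so `D` is three
times the projection `K → K/K²`. This gives surjectivity of `D`, and shows that an element `x`
of `ker D` differs from the symmetric tensor `(μx ⊗ 1 + μx ⊗ 1 + 1 ⊗ μx)/3 ∈ im r` by an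
element of `K²`. Finally `K² ⊆ im r`, because `(p ⊗ q)(1 ⊗ a - a ⊗ 1)(1 ⊗ b - b ⊗ 1)` is an
alternating sum of four tensors of the form `xy ⊗ z + xz ⊗ y + yz ⊗ x`.

The kernel of `r` is `J₃ ∩ B^{S₃}` because `μ₁₃` and `μ₂₃` are `μ₁₂` precomposed with
permutations (followed by the flip for `μ₂₃`).
-/

open scoped TensorProduct

noncomputable section

namespace DiagIdeals

variable (A : Type) [CommRing A] [Algebra ℂ A]

/-- `B = A ⊗ A ⊗ A` (the triple tensor product over ℂ, parenthesized to the left). -/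
abbrev B3 := (A ⊗[ℂ] A) ⊗[ℂ] A

/-- The multiplication map `μ : A ⊗ A → A`. -/
abbrev mu : A ⊗[ℂ] A →ₐ[ℂ] A := Algebra.TensorProduct.lmul' ℂ

/-- `μ₁₂ : A⊗A⊗A → A⊗A`, multiplying the first and second tensor factors. -/
def mu12 : B3 A →ₐ[ℂ] A ⊗[ℂ] A :=
  Algebra.TensorProduct.map (mu A) (AlgHom.id ℂ A)

/-- `μ₂₃ : A⊗A⊗A → A⊗A`, multiplying the second and third tensor factors. -/
def mu23 : B3 A →ₐ[ℂ] A ⊗[ℂ] A :=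
  (Algebra.TensorProduct.map (AlgHom.id ℂ A) (mu A)).comp
    (Algebra.TensorProduct.assoc ℂ ℂ ℂ A A A).toAlgHom

/-- The automorphism of `A⊗A⊗A` exchanging the first two tensor factors. -/
def s12 : B3 A ≃ₐ[ℂ] B3 A :=
  Algebra.TensorProduct.congr (Algebra.TensorProduct.comm ℂ A A) AlgEquiv.refl

/-- The automorphism of `A⊗A⊗A` exchanging the last two tensor factors. -/
def s23 : B3 A ≃ₐ[ℂ] B3 A :=
  (Algebra.TensorProduct.assoc ℂ ℂ ℂ A A A).trans
    ((Algebra.TensorProduct.congr AlgEquiv.refl (Algebra.TensorProduct.comm ℂ A A)).trans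
      (Algebra.TensorProduct.assoc ℂ ℂ ℂ A A A).symm)

/-- `μ₁₃ : A⊗A⊗A → A⊗A`, multiplying the first and third tensor factors. -/
def mu13 : B3 A →ₐ[ℂ] A ⊗[ℂ] A := (mu12 A).comp (s23 A).toAlgHom

/-- The ideal `I₁₂ = ker μ₁₂` of the (1,2)-th pairwise diagonal. -/
def I12 : Ideal (B3 A) := RingHom.ker (mu12 A)

/-- The ideal `I₁₃ = ker μ₁₃` of the (1,3)-th pairwise diagonal. -/
def I13 : Ideal (B3 A) := RingHom.ker (mu13 A)

/-- The ideal `I₂₃ = ker μ₂₃` of the (2,3)-th pairwise diagonal. -/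
def I23 : Ideal (B3 A) := RingHom.ker (mu23 A)

/-- The ideal `J₃` of the big diagonal in `A⊗A⊗A`. -/
def J3 : Ideal (B3 A) := I12 A ⊓ I13 A ⊓ I23 A

/-- The set of `S₃`-invariant elements of `B = A⊗A⊗A`, for the action of `S₃`
permuting the tensor factors (invariance under the generating transpositions). -/
def inv3 : Set (B3 A) := {b | s12 A b = b ∧ s23 A b = b}

/-- The linear endomorphism of `A ⊗ A` sending `a⊗b` to `2(a⊗b) − (b⊗a) − (ab⊗1)`. -/
def Fmap : A ⊗[ℂ] A →ₗ[ℂ] A ⊗[ℂ] A :=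
  (2 : ℂ) • LinearMap.id - (TensorProduct.comm ℂ A A).toLinearMap
    - ((TensorProduct.mk ℂ A A).flip 1 ∘ₗ LinearMap.mul' ℂ A)

lemma Fmap_mem (x : A ⊗[ℂ] A) :
    Fmap A x ∈ (KaehlerDifferential.ideal ℂ A).restrictScalars ℂ := by
  simp only [Submodule.restrictScalars_mem, KaehlerDifferential.ideal, RingHom.mem_ker]
  induction x using TensorProduct.induction_on with
  | zero => simp
  | tmul a b =>
      simp only [Fmap, LinearMap.sub_apply, LinearMap.smul_apply, LinearMap.id_apply,
        LinearEquiv.coe_coe, TensorProduct.comm_tmul, LinearMap.coe_comp,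
        Function.comp_apply, LinearMap.mul'_apply, TensorProduct.mk_apply,
        LinearMap.flip_apply, map_sub, map_smul]
      simp only [Algebra.TensorProduct.lmul'_apply_tmul, smul_eq_mul, mul_one]
      rw [two_smul]
      ring
  | add x y hx hy =>
      simp only [map_add, hx, hy, add_zero]

/-- The ℂ-linear map `D : A ⊗ A → K/K² = Ω[A⁄ℂ]` sending `a⊗b` to the class of
`2(a⊗b) − (b⊗a) − (ab⊗1)` (which lies in `K`); under `K/K² ≅ Ω¹_{A/ℂ}` this is
`2a db − b da`. -/
def Dmap : A ⊗[ℂ] A →ₗ[ℂ] Ω[A⁄ℂ] :=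
  (((KaehlerDifferential.ideal ℂ A).toCotangent).restrictScalars ℂ).comp
    ((Fmap A).codRestrict ((KaehlerDifferential.ideal ℂ A).restrictScalars ℂ) (Fmap_mem A))

theorem _root_.Derivation.tensorProductTo_comm_add_tensorProductTo {R S M : Type*}
    [CommRing R] [CommRing S] [Algebra R S] [AddCommGroup M] [Module R M] [Module S M]
    [IsScalarTower R S M] (D : Derivation R S M) (z : S ⊗[R] S) :
    D.tensorProductTo (TensorProduct.comm R S S z) + D.tensorProductTo z =
      D (Algebra.TensorProduct.lmul' R z) := by
  induction z using TensorProduct.induction_on with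
  | zero => simp
  | tmul a b =>
    simp only [TensorProduct.comm_tmul, Derivation.tensorProductTo_tmul,
      Algebra.TensorProduct.lmul'_apply_tmul, Derivation.leibniz, add_comm]
  | add u v hu hv =>
    simp only [map_add, ← hu, ← hv]
    abel

@[simp] lemma s12_tmul (x y z : A) : s12 A ((x ⊗ₜ y) ⊗ₜ z) = (y ⊗ₜ x) ⊗ₜ z := by simp [s12]

@[simp] lemma s23_tmul (x y z : A) : s23 A ((x ⊗ₜ y) ⊗ₜ z) = (x ⊗ₜ z) ⊗ₜ y := by simp [s23]

@[simp] lemma mu12_tmul (x y z : A) : mu12 A ((x ⊗ₜ y) ⊗ₜ z) = (x * y) ⊗ₜ z := by simp [mu12]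

@[simp] lemma mu23_tmul (x y z : A) : mu23 A ((x ⊗ₜ y) ⊗ₜ z) = x ⊗ₜ (y * z) := by simp [mu23]

lemma mu23_eq_comm_mu12_s23_s12 (b : B3 A) :
    mu23 A b = Algebra.TensorProduct.comm ℂ A A (mu12 A (s23 A (s12 A b))) := by
  have h : (mu23 A).toLinearMap = (Algebra.TensorProduct.comm ℂ A A).toLinearMap ∘ₗ
      (mu12 A).toLinearMap ∘ₗ (s23 A).toLinearMap ∘ₗ (s12 A).toLinearMap :=
    TensorProduct.ext_threefold fun x y z => by simp
  exact LinearMap.congr_fun h b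

theorem mu12_eq_zero_iff_mem_J3 {b : B3 A} (hb : b ∈ inv3 A) : mu12 A b = 0 ↔ b ∈ J3 A := by
  refine ⟨fun h => ?_, fun h => h.1.1⟩
  have h13 : mu13 A b = 0 := by simp [mu13, hb.2, h]
  have h23 : mu23 A b = 0 := by rw [mu23_eq_comm_mu12_s23_s12, hb.1, hb.2, h, map_zero]
  exact ⟨⟨h, h13⟩, h23⟩

def symmetrize : B3 A →ₗ[ℂ] B3 A :=
  LinearMap.id + (s12 A).toLinearMap + (s23 A).toLinearMap +
    (s12 A).toLinearMap ∘ₗ (s23 A).toLinearMap + (s23 A).toLinearMap ∘ₗ (s12 A).toLinearMap +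
    (s12 A).toLinearMap ∘ₗ (s23 A).toLinearMap ∘ₗ (s12 A).toLinearMap

lemma symmetrize_tmul (x y z : A) :
    symmetrize A ((x ⊗ₜ y) ⊗ₜ z) = (x ⊗ₜ y) ⊗ₜ z + (y ⊗ₜ x) ⊗ₜ z + (x ⊗ₜ z) ⊗ₜ y +
      (z ⊗ₜ x) ⊗ₜ y + (y ⊗ₜ z) ⊗ₜ x + (z ⊗ₜ y) ⊗ₜ x := by
  simp [symmetrize]

lemma symmetrize_of_mem_inv3 {b : B3 A} (hb : b ∈ inv3 A) : symmetrize A b = (6 : ℂ) • b := by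
  simp only [symmetrize, LinearMap.add_apply, LinearMap.comp_apply, LinearMap.id_apply,
    AlgEquiv.toLinearMap_apply, hb.1, hb.2]
  module

lemma symmetrize_mem_inv3 (b : B3 A) : symmetrize A b ∈ inv3 A := by
  have h12 : (s12 A).toLinearMap ∘ₗ symmetrize A = symmetrize A :=
    TensorProduct.ext_threefold fun x y z => by simp [symmetrize_tmul]; abel
  have h23 : (s23 A).toLinearMap ∘ₗ symmetrize A = symmetrize A :=
    TensorProduct.ext_threefold fun x y z => by simp [symmetrize_tmul]; abel
  exact ⟨LinearMap.congr_fun h12 b, LinearMap.congr_fun h23 b⟩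

def symmetricSum (x y z : A) : A ⊗[ℂ] A := (x * y) ⊗ₜ z + (x * z) ⊗ₜ y + (y * z) ⊗ₜ x

lemma mu12_symmetrize_tmul (x y z : A) :
    mu12 A (symmetrize A ((x ⊗ₜ y) ⊗ₜ z)) = (2 : ℂ) • symmetricSum A x y z := by
  simp only [symmetrize_tmul, symmetricSum, map_add, mu12_tmul, mul_comm y x, mul_comm z x,
    mul_comm z y]
  module

lemma Dmap_eq (x : A ⊗[ℂ] A) :
    Dmap A x = (KaehlerDifferential.D ℂ A).tensorProductTo (Fmap A x) :=
  (KaehlerDifferential.D_tensorProductTo ⟨Fmap A x, Fmap_mem A x⟩).symm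

lemma Dmap_tmul (u v : A) :
    Dmap A (u ⊗ₜ v) = (2 * u) • KaehlerDifferential.D ℂ A v - v • KaehlerDifferential.D ℂ A u := by
  simp [Dmap_eq, Fmap, Derivation.tensorProductTo_tmul, mul_smul, two_smul]

lemma Dmap_symmetricSum (x y z : A) : Dmap A (symmetricSum A x y z) = 0 := by
  simp only [symmetricSum, map_add, Dmap_tmul, Derivation.leibniz]
  module

lemma Dmap_mu12_symmetrize (b : B3 A) : Dmap A (mu12 A (symmetrize A b)) = 0 := by
  have h : Dmap A ∘ₗ (mu12 A).toLinearMap ∘ₗ symmetrize A = 0 :=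
    TensorProduct.ext_threefold fun x y z => by
      simp only [LinearMap.comp_apply, AlgHom.toLinearMap_apply, mu12_symmetrize_tmul, map_smul,
        Dmap_symmetricSum, smul_zero, LinearMap.zero_apply]
  exact LinearMap.congr_fun h b

lemma Dmap_mu12_of_mem_inv3 {b : B3 A} (hb : b ∈ inv3 A) : Dmap A (mu12 A b) = 0 := by
  have h := Dmap_mu12_symmetrize A b
  rw [symmetrize_of_mem_inv3 A hb, map_smul, map_smul] at h
  exact (smul_eq_zero.mp h).resolve_left (by norm_num)

def invariants : Submodule ℂ (B3 A) where
  carrier := inv3 A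
  add_mem' ha hb := ⟨by rw [map_add, ha.1, hb.1], by rw [map_add, ha.2, hb.2]⟩
  zero_mem' := ⟨map_zero _, map_zero _⟩
  smul_mem' c _ hb := ⟨by rw [map_smul, hb.1], by rw [map_smul, hb.2]⟩

def invariantImage : Submodule ℂ (A ⊗[ℂ] A) := (invariants A).map (mu12 A).toLinearMap

lemma Dmap_eq_zero_of_mem_invariantImage {x : A ⊗[ℂ] A} (hx : x ∈ invariantImage A) :
    Dmap A x = 0 := by
  obtain ⟨b, hb, rfl⟩ := hx
  exact Dmap_mu12_of_mem_inv3 A hb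

lemma symmetricSum_mem_invariantImage (x y z : A) : symmetricSum A x y z ∈ invariantImage A := by
  have h : mu12 A (symmetrize A ((x ⊗ₜ y) ⊗ₜ z)) ∈ invariantImage A :=
    ⟨_, symmetrize_mem_inv3 A ((x ⊗ₜ y) ⊗ₜ z), rfl⟩
  rwa [mu12_symmetrize_tmul, Submodule.smul_mem_iff _ two_ne_zero] at h

lemma tmul_mul_generator_mul_generator_mem_invariantImage (p q a b : A) :
    (p ⊗ₜ q) * ((1 ⊗ₜ a - a ⊗ₜ 1) * (1 ⊗ₜ b - b ⊗ₜ 1)) ∈ invariantImage A := by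
  have key : (p ⊗ₜ[ℂ] q) * ((1 ⊗ₜ a - a ⊗ₜ 1) * (1 ⊗ₜ b - b ⊗ₜ 1)) =
      symmetricSum A 1 p (q * (a * b)) - symmetricSum A 1 (p * b) (q * a) -
        symmetricSum A p a (q * b) + symmetricSum A q a (p * b) := by
    simp only [symmetricSum, mul_sub, sub_mul, Algebra.TensorProduct.tmul_mul_tmul, one_mul,
      mul_one]
    ring_nf
  rw [key]
  exact add_mem (sub_mem (sub_mem (symmetricSum_mem_invariantImage A _ _ _)
    (symmetricSum_mem_invariantImage A _ _ _)) (symmetricSum_mem_invariantImage A _ _ _))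
    (symmetricSum_mem_invariantImage A _ _ _)

lemma ideal_sq_le_invariantImage :
    ((KaehlerDifferential.ideal ℂ A) ^ 2).restrictScalars ℂ ≤ invariantImage A := by
  intro y hy
  rw [Submodule.restrictScalars_mem, sq, ← KaehlerDifferential.span_range_eq_ideal,
    Ideal.span_mul_span'] at hy
  suffices ∀ r, r * y ∈ invariantImage A by simpa using this 1
  induction hy using Submodule.span_induction with
  | mem _ hg =>
    obtain ⟨_, ⟨a, rfl⟩, _, ⟨b, rfl⟩, rfl⟩ := hg
    intro r
    induction r using TensorProduct.induction_on with
    | zero => simp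
    | tmul p q => exact tmul_mul_generator_mul_generator_mem_invariantImage A p q a b
    | add u v hu hv => rw [add_mul]; exact add_mem hu hv
  | zero => simp
  | add u v _ _ hu hv => intro r; rw [mul_add]; exact add_mem (hu r) (hv r)
  | smul c u _ hu => intro r; rw [smul_eq_mul, ← mul_assoc]; exact hu (r * c)

lemma Fmap_of_mem_ideal {y : A ⊗[ℂ] A} (hy : y ∈ KaehlerDifferential.ideal ℂ A) :
    Fmap A y = (2 : ℂ) • y - TensorProduct.comm ℂ A A y := by
  have hμ : LinearMap.mul' ℂ A y = 0 := by
    rwa [← Algebra.TensorProduct.lmul'_toLinearMap]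
  simp [Fmap, hμ]

theorem Dmap_of_mem_ideal {y : A ⊗[ℂ] A} (hy : y ∈ KaehlerDifferential.ideal ℂ A) :
    Dmap A y = (3 : ℂ) • (KaehlerDifferential.D ℂ A).tensorProductTo y := by
  have hflip := (KaehlerDifferential.D ℂ A).tensorProductTo_comm_add_tensorProductTo y
  rw [show Algebra.TensorProduct.lmul' ℂ y = 0 from hy, map_zero, add_eq_zero_iff_eq_neg] at hflip
  rw [Dmap_eq, Fmap_of_mem_ideal A hy, map_sub, hflip, LinearMap.map_smul_of_tower]
  module

theorem Dmap_surjective : Function.Surjective (Dmap A) := by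
  intro ω
  obtain ⟨⟨y, hy⟩, rfl⟩ := KaehlerDifferential.fromIdeal_surjective ℂ A ω
  refine ⟨(3⁻¹ : ℂ) • y, ?_⟩
  rw [map_smul, Dmap_of_mem_ideal A hy, smul_smul, inv_mul_cancel₀ three_ne_zero, one_smul]
  exact KaehlerDifferential.D_tensorProductTo ⟨y, hy⟩

lemma mem_invariantImage_of_Dmap_eq_zero {x : A ⊗[ℂ] A} (hx : Dmap A x = 0) :
    x ∈ invariantImage A := by
  set m := Algebra.TensorProduct.lmul' ℂ x
  set x₀ : A ⊗[ℂ] A := (3⁻¹ : ℂ) • (m ⊗ₜ 1 + m ⊗ₜ 1 + 1 ⊗ₜ m)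
  have hx₀ : x₀ ∈ invariantImage A :=
    Submodule.smul_mem _ _ (by simpa [symmetricSum] using symmetricSum_mem_invariantImage A m 1 1)
  have hy : x - x₀ ∈ KaehlerDifferential.ideal ℂ A := by
    show Algebra.TensorProduct.lmul' ℂ (x - x₀) = 0
    simp only [x₀, map_sub, map_smul, map_add, Algebra.TensorProduct.lmul'_apply_tmul, mul_one,
      one_mul]
    module
  have hcot : (KaehlerDifferential.ideal ℂ A).toCotangent ⟨x - x₀, hy⟩ = 0 := by
    have h : Dmap A (x - x₀) = 0 := by
      rw [map_sub, hx, Dmap_eq_zero_of_mem_invariantImage A hx₀, sub_zero]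
    rw [Dmap_of_mem_ideal A hy] at h
    rw [← KaehlerDifferential.D_tensorProductTo]
    exact (smul_eq_zero.mp h).resolve_left three_ne_zero
  have hsq := ideal_sq_le_invariantImage A ((Ideal.toCotangent_eq_zero _ _).mp hcot)
  simpa using add_mem hsq hx₀

theorem invariantImage_eq_ker_Dmap : invariantImage A = LinearMap.ker (Dmap A) :=
  le_antisymm (fun _ => Dmap_eq_zero_of_mem_invariantImage A)
    (fun _ => mem_invariantImage_of_Dmap_eq_zero A)

theorem stmt11_general (A : Type) [CommRing A] [Algebra ℂ A] :
    (∀ b ∈ inv3 A, (mu12 A b = 0 ↔ b ∈ J3 A)) ∧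
    {x : A ⊗[ℂ] A | ∃ b ∈ inv3 A, mu12 A b = x} = {x : A ⊗[ℂ] A | Dmap A x = 0} ∧
    Function.Surjective (Dmap A) :=
  ⟨fun _ => mu12_eq_zero_iff_mem_J3 A, congrArg SetLike.coe (invariantImage_eq_ker_Dmap A),
    Dmap_surjective A⟩

/-- Let `A` be a smooth ℂ-algebra, `B = A⊗A⊗A` with `S₃` permuting
the tensor factors, and `J₃ = I₁₂ ∩ I₁₃ ∩ I₂₃`. Let `r : B^{S₃} → A⊗A` be the
restriction of `μ₁₂` to the `S₃`-invariants, and `D : A⊗A → K/K²` the ℂ-linear map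
`a⊗b ↦ [2(a⊗b) − (b⊗a) − (ab⊗1)]` (i.e. `2a·db − b·da`). Then the sequence
`0 → J₃ ∩ B^{S₃} → B^{S₃} →ʳ A⊗A →ᴰ K/K² → 0` is exact: `ker r = J₃ ∩ B^{S₃}`,
`im r = ker D`, and `D` is surjective. -/
theorem stmt11 (A : Type) [CommRing A] [Algebra ℂ A]
    [Algebra.FormallySmooth ℂ A] [Algebra.FinitePresentation ℂ A] :
    (∀ b ∈ inv3 A, (mu12 A b = 0 ↔ b ∈ J3 A)) ∧
    {x : A ⊗[ℂ] A | ∃ b ∈ inv3 A, mu12 A b = x} = {x : A ⊗[ℂ] A | Dmap A x = 0} ∧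
    Function.Surjective (Dmap A) :=
  stmt11_general A

end DiagIdeals

end
end

section
/- In B = ℂ[x₁,x₂,x₃,y₁,y₂,y₃], let I_{ij} = (xᵢ−xⱼ, yᵢ−yⱼ) for 1 ≤ i < j ≤ 3 and let q = (x₂−x₁)(y₃−y₁) − (y₂−y₁)(x₃−x₁). Then the ideal of the big diagonal equals the product ideal together with q: I₁₂ ∩ I₁₃ ∩ I₂₃ = I₁₂·I₁₃·I₂₃ + (q). -/
/-!
Statement 15: In `B = ℂ[x₁,x₂,x₃,y₁,y₂,y₃]` (realized as
`MvPolynomial (Fin 3 × Fin 2) ℂ`, with `X (i,0) = x_{i+1}` and `X (i,1) = y_{i+1}`),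
with `I_{ij} = (xᵢ − xⱼ, yᵢ − yⱼ)` and
`q = (x₂−x₁)(y₃−y₁) − (y₂−y₁)(x₃−x₁)`, the ideal of the big diagonal equals the
product ideal together with `q`:
`I₁₂ ∩ I₁₃ ∩ I₂₃ = I₁₂·I₁₃·I₂₃ + (q)`.
-/

noncomputable section

open MvPolynomial

/-- The polynomial ring `B = ℂ[x₁,x₂,x₃,y₁,y₂,y₃]`. -/
abbrev Bpoly := MvPolynomial (Fin 3 × Fin 2) ℂ

/-- The ideal `I_{ij} = (xᵢ − xⱼ, yᵢ − yⱼ)` (indices `0`-based). -/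
def pairIdeal (i j : Fin 3) : Ideal Bpoly :=
  Ideal.span {X (i, 0) - X (j, 0), X (i, 1) - X (j, 1)}

/-- The quadric `q = (x₂−x₁)(y₃−y₁) − (y₂−y₁)(x₃−x₁)` (indices `0`-based). -/
def qQuadric : Bpoly :=
  (X (1, 0) - X (0, 0)) * (X (2, 1) - X (0, 1))
    - (X (1, 1) - X (0, 1)) * (X (2, 0) - X (0, 0))

/-!
The involution `xᵢ ↦ x₁ − xᵢ` (`i = 2, 3`, likewise for `y`) turns `I₁₂, I₁₃, I₂₃` into
`(u, v), (a, b), (a − u, b − v)` with `u, v, a, b = x₂, y₂, x₃, y₃`, and `q` into `ub − va`.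
The first two ideals live in disjoint variables, so their intersection is their product and
`f = (Pa + Qb)u + (Ra + Sb)v`. The substitution `a ↦ u, b ↦ v` kills the third ideal and turns
this into a syzygy of `u², uv, v²`; these are generated by the Koszul ones, and rewriting `f`
accordingly puts it in `I₁₂ I₁₃ I₂₃ + (ub − va)`.
-/

namespace Ideal

variable {R S : Type*} [CommRing R] [CommRing S]

theorem mem_mul_span_pair {I : Ideal R} {x y z : R} :
    z ∈ I * span {x, y} ↔ ∃ a ∈ I, ∃ b ∈ I, a * x + b * y = z := by
  rw [span_insert, Ideal.mul_sup, Submodule.mem_sup]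
  simp only [mem_mul_span_singleton]
  constructor
  · rintro ⟨-, ⟨a, ha, rfl⟩, -, ⟨b, hb, rfl⟩, rfl⟩
    exact ⟨a, ha, b, hb, rfl⟩
  · rintro ⟨a, ha, b, hb, rfl⟩
    exact ⟨_, ⟨a, ha, rfl⟩, _, ⟨b, hb, rfl⟩, rfl⟩

theorem map_inf_of_ringEquiv (e : R ≃+* S) (I J : Ideal R) :
    map e (I ⊓ J) = map e I ⊓ map e J := by
  simp only [← comap_symm, comap_inf]

end Ideal

theorem exists_of_mul_sq_add_mul_add_mul_sq_eq_zero {A : Type*} [CommRing A] [IsDomain A]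
    {u v P C S : A} (hv : Prime v) (hvu : ¬v ∣ u) (h : P * u ^ 2 + C * (u * v) + S * v ^ 2 = 0) :
    ∃ α β, P = α * v ∧ C = β * v - α * u ∧ S = -(β * u) := by
  have hv0 : v ≠ 0 := hv.ne_zero
  obtain ⟨α, rfl⟩ : v ∣ P := by
    have : v ∣ P * u ^ 2 := ⟨-(C * u) - S * v, by linear_combination h⟩
    exact (hv.dvd_or_dvd this).resolve_right fun h' => hvu (hv.dvd_of_dvd_pow h')
  have h' : α * u ^ 2 + C * u + S * v = 0 := mul_left_cancel₀ hv0 (by linear_combination h)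
  obtain ⟨β, hβ⟩ : v ∣ α * u + C := by
    have : v ∣ u * (α * u + C) := ⟨-S, by linear_combination h'⟩
    exact (hv.dvd_or_dvd this).resolve_left hvu
  refine ⟨α, β, by ring, by linear_combination hβ, mul_left_cancel₀ hv0 ?_⟩
  linear_combination h' - u * hβ

namespace MvPolynomial

variable {σ R : Type*} [CommRing R]

theorem sub_aeval_mem {I : Ideal (MvPolynomial σ R)} {g : σ → MvPolynomial σ R}
    (hg : ∀ i, X i - g i ∈ I) (f : MvPolynomial σ R) : f - aeval g f ∈ I := by
  have : (Ideal.Quotient.mkₐ R I).comp (aeval g) = Ideal.Quotient.mkₐ R I :=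
    algHom_ext fun i => by simpa [Ideal.Quotient.eq] using I.neg_mem (hg i)
  rw [← Ideal.Quotient.eq]
  exact (DFunLike.congr_fun this f).symm

variable {u v a b : σ}

theorem span_X_pair_inf_span_X_pair (hua : u ≠ a) (hub : u ≠ b) (hva : v ≠ a) (hvb : v ≠ b) :
    Ideal.span {X u, X v} ⊓ Ideal.span {X a, X b} =
      Ideal.span {(X u : MvPolynomial σ R), X v} * Ideal.span {X a, X b} := by
  classical
  refine le_antisymm (fun f hf => ?_) Ideal.mul_le_inf
  obtain ⟨hfuv, hfab⟩ := Ideal.mem_inf.mp hf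
  set κ : MvPolynomial σ R →ₐ[R] MvPolynomial σ R := aeval fun i => if i = a ∨ i = b then 0 else X i
  have hκ : ∀ p, p - κ p ∈ Ideal.span {X a, X b} := sub_aeval_mem fun i => by
    split_ifs with hi
    · rcases hi with rfl | rfl <;> simpa using Ideal.subset_span (by simp)
    · simp
  have hκf : κ f = 0 := by
    obtain ⟨c, d, rfl⟩ := Ideal.mem_span_pair.mp hfab
    simp [κ]
  obtain ⟨c, d, rfl⟩ := Ideal.mem_span_pair.mp hfuv
  rw [mul_comm, Ideal.mem_mul_span_pair]
  refine ⟨c - κ c, hκ c, d - κ d, hκ d, ?_⟩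
  have hκu : κ (X u) = X u := by simp [κ, hua, hub]
  have hκv : κ (X v) = X v := by simp [κ, hva, hvb]
  rw [map_add, map_mul, map_mul, hκu, hκv] at hκf
  linear_combination -hκf

theorem exists_algHom_sub_mem_span_X_sub_pair (hua : u ≠ a) (hub : u ≠ b) (hva : v ≠ a)
    (hvb : v ≠ b) (hab : a ≠ b) :
    ∃ φ : MvPolynomial σ R →ₐ[R] MvPolynomial σ R,
      (∀ p, p - φ p ∈ Ideal.span {X a - X u, X b - X v}) ∧
        φ (X u) = X u ∧ φ (X v) = X v ∧ φ (X a) = X u ∧ φ (X b) = X v := by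
  classical
  refine ⟨aeval fun i => if i = a then X u else if i = b then X v else X i,
    sub_aeval_mem fun i => ?_, by simp [hua, hub], by simp [hva, hvb], by simp, by simp [hab.symm]⟩
  split_ifs with hia hib
  · subst hia; exact Ideal.subset_span (by simp)
  · subst hib; exact Ideal.subset_span (by simp)
  · simp

theorem span_X_pair_inf_span_X_pair_inf_span_X_sub_pair_le [IsDomain R] (huv : u ≠ v)
    (hua : u ≠ a) (hub : u ≠ b) (hva : v ≠ a) (hvb : v ≠ b) (hab : a ≠ b) :
    Ideal.span {X u, X v} ⊓ Ideal.span {X a, X b} ⊓ Ideal.span {X a - X u, X b - X v} ≤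
      Ideal.span {(X u : MvPolynomial σ R), X v} * Ideal.span {X a, X b} *
          Ideal.span {X a - X u, X b - X v} +
        Ideal.span {X u * X b - X v * X a} := by
  set P₁ := Ideal.span {(X u : MvPolynomial σ R), X v}
  set P₂ := Ideal.span {(X a : MvPolynomial σ R), X b}
  set P₃ := Ideal.span {(X a : MvPolynomial σ R) - X u, X b - X v}
  rintro f ⟨⟨hf₁, hf₂⟩, hf₃⟩
  have hf₁₂ : f ∈ P₂ * P₁ := by
    rw [mul_comm, ← span_X_pair_inf_span_X_pair hua hub hva hvb]
    exact ⟨hf₁, hf₂⟩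
  obtain ⟨A, hA, B, hB, rfl⟩ := Ideal.mem_mul_span_pair.mp hf₁₂
  obtain ⟨P, Q, rfl⟩ := Ideal.mem_span_pair.mp hA
  obtain ⟨R', S, rfl⟩ := Ideal.mem_span_pair.mp hB
  -- Substituting `a ↦ u, b ↦ v` kills `P₃`, so it turns `f` into a syzygy of `u², uv, v²`.
  obtain ⟨φ, hφ, hφu, hφv, hφa, hφb⟩ :=
    exists_algHom_sub_mem_span_X_sub_pair (R := R) hua hub hva hvb hab
  have hφf : φ P * X u ^ 2 + (φ Q + φ R') * (X u * X v) + φ S * X v ^ 2 = 0 := by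
    obtain ⟨c, d, hcd⟩ := Ideal.mem_span_pair.mp hf₃
    have := congrArg φ hcd
    simp only [map_add, map_mul, map_sub, hφu, hφv, hφa, hφb, sub_self, mul_zero,
      add_zero] at this
    linear_combination -this
  obtain ⟨α, β, hP, hC, hS⟩ := exists_of_mul_sq_add_mul_add_mul_sq_eq_zero
    (X_prime (i := v)) (by simpa using huv.symm) hφf
  have hdecomp : (P * X a + Q * X b) * X u + (R' * X a + S * X b) * X v =
      (P - φ P) * (X u * X a) + (Q - φ Q) * (X u * X b) + (R' - φ R') * (X v * X a) +
        (S - φ S) * (X v * X b) + (φ Q - β * X v) * (X u * X b - X v * X a) := by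
    linear_combination (X u * (X a - X u)) * hP + (X v * (X a - X u)) * hC +
      (X v * (X b - X v)) * hS + hφf
  have mem : ∀ p, ∀ x ∈ P₁, ∀ y ∈ P₂, (p - φ p) * (x * y) ∈ P₁ * P₂ * P₃ := fun p x hx y hy =>
    mul_comm (x * y) _ ▸ Ideal.mul_mem_mul (Ideal.mul_mem_mul hx hy) (hφ p)
  have hu : X u ∈ P₁ := Ideal.subset_span (by simp)
  have hv : X v ∈ P₁ := Ideal.subset_span (by simp)
  have ha : X a ∈ P₂ := Ideal.subset_span (by simp)
  have hb : X b ∈ P₂ := Ideal.subset_span (by simp)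
  rw [hdecomp]
  refine Ideal.add_mem _ (Ideal.mem_sup_left ?_) (Ideal.mem_sup_right ?_)
  · exact add_mem (add_mem (add_mem (mem P _ hu _ ha) (mem Q _ hu _ hb)) (mem R' _ hv _ ha))
      (mem S _ hv _ hb)
  · exact Ideal.mul_mem_left _ _ (Ideal.mem_span_singleton_self _)

theorem span_X_pair_inf_span_X_pair_inf_span_X_sub_pair [IsDomain R] (h : [u, v, a, b].Nodup) :
    Ideal.span {X u, X v} ⊓ Ideal.span {X a, X b} ⊓ Ideal.span {X a - X u, X b - X v} =
      Ideal.span {(X u : MvPolynomial σ R), X v} * Ideal.span {X a, X b} *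
          Ideal.span {X a - X u, X b - X v} +
        Ideal.span {X u * X b - X v * X a} := by
  simp only [List.nodup_cons, List.mem_cons, List.not_mem_nil, List.nodup_nil] at h
  refine le_antisymm (span_X_pair_inf_span_X_pair_inf_span_X_sub_pair_le (R := R)
    (by tauto) (by tauto) (by tauto) (by tauto) (by tauto) (by tauto)) (sup_le ?_ ?_)
  · exact Ideal.mul_le_inf.trans (inf_le_inf_right _ Ideal.mul_le_inf)
  · rw [Ideal.span_le, Set.singleton_subset_iff]
    refine ⟨⟨?_, ?_⟩, ?_⟩ <;> refine Ideal.mem_span_pair.mpr ?_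
    exacts [⟨X b, -X a, by ring⟩, ⟨-X v, X u, by ring⟩, ⟨-X v, X u, by ring⟩]

end MvPolynomial

def relativeCoords : Bpoly →ₐ[ℂ] Bpoly :=
  aeval fun p => if p.1 = 0 then X p else X (0, p.2) - X p

theorem relativeCoords_comp_self : relativeCoords.comp relativeCoords = AlgHom.id ℂ Bpoly := by
  refine algHom_ext fun ⟨i, k⟩ => ?_
  fin_cases i <;> simp [relativeCoords]

def relativeCoordsEquiv : Bpoly ≃+* Bpoly :=
  (AlgEquiv.ofAlgHom _ _ relativeCoords_comp_self relativeCoords_comp_self).toRingEquiv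

theorem relativeCoordsEquiv_X (i : Fin 3) (k : Fin 2) :
    relativeCoordsEquiv (X (i, k)) = if i = 0 then X (i, k) else X (0, k) - X (i, k) := by
  simp [relativeCoordsEquiv, relativeCoords]

theorem map_relativeCoordsEquiv_span_X_pair {j : Fin 3} (hj : j ≠ 0) :
    Ideal.map relativeCoordsEquiv (Ideal.span {X (j, 0), X (j, 1)}) = pairIdeal 0 j := by
  simp [Ideal.map_span, Set.image_pair, relativeCoordsEquiv_X, hj, pairIdeal]

theorem map_relativeCoordsEquiv_span_X_sub_pair :
    Ideal.map relativeCoordsEquiv (Ideal.span {X (2, 0) - X (1, 0), X (2, 1) - X (1, 1)}) =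
      pairIdeal 1 2 := by
  simp [Ideal.map_span, Set.image_pair, relativeCoordsEquiv_X, pairIdeal]

theorem relativeCoordsEquiv_qQuadric :
    relativeCoordsEquiv (X (1, 0) * X (2, 1) - X (1, 1) * X (2, 0)) = qQuadric := by
  simp only [map_sub, map_mul, relativeCoordsEquiv_X, qQuadric, Fin.isValue, one_ne_zero,
    ↓reduceIte, Fin.reduceEq]
  ring

/-- `I₁₂ ∩ I₁₃ ∩ I₂₃ = I₁₂·I₁₃·I₂₃ + (q)`. -/
theorem stmt15 :
    pairIdeal 0 1 ⊓ pairIdeal 0 2 ⊓ pairIdeal 1 2 =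
      pairIdeal 0 1 * pairIdeal 0 2 * pairIdeal 1 2 + Ideal.span {qQuadric} := by
  have key := congrArg (Ideal.map relativeCoordsEquiv)
    (span_X_pair_inf_span_X_pair_inf_span_X_sub_pair (R := ℂ)
      (u := ((1 : Fin 3), (0 : Fin 2))) (v := (1, 1)) (a := (2, 0)) (b := (2, 1)) (by decide))
  rwa [Ideal.map_inf_of_ringEquiv, Ideal.map_inf_of_ringEquiv, Ideal.add_eq_sup, Ideal.map_sup,
    Ideal.map_mul, Ideal.map_mul, map_relativeCoordsEquiv_span_X_pair (j := 1) (by decide),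
    map_relativeCoordsEquiv_span_X_pair (j := 2) (by decide),
    map_relativeCoordsEquiv_span_X_sub_pair,
    Ideal.map_span, Set.image_singleton, relativeCoordsEquiv_qQuadric, ← Ideal.add_eq_sup] at key

end
end
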